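/- arXiv:0902.3468 — 6 statements merged into one kernel-verified Lean document; each statement's English description precedes it below -/
import Mathlib

section
/- Ramanujan's functions P, Q, R defined by P(q) = 1 − 24∑_{n≥1} n qⁿ/(1−qⁿ), Q(q) = 1 + 240∑_{n≥1} n³qⁿ/(1−qⁿ), R(q) = 1 − 504∑_{n≥1} n⁵qⁿ/(1−qⁿ), regarded as formal power series in q, satisfy δP = (P²−Q)/12 where δ = q d/dq. -/
/-!
Expanding `σ₁(k) σ₁(l) = ∑_{a x = k, b y = l} a b` turns `∑_{k + l = n} σ₁(k) σ₁(l)` into the sum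
of `a b` over the quadruples of positive integers with `a x + b y = n`. The swap
`(a, x) ↔ (b, y)` reduces sums of symmetric weights to the diagonal plus twice one side, once
for the comparison of `x` with `y` and once for that of `a` with `b`; the shear
`(a, x, b, y) ↦ (a, x + y, b - a, y)` maps `{a < b}` onto `{y < x}` and changes the weight
`a² - a b + b²` by `2 a b`. Comparing the two splittings of `∑ (a² - a b + b²)` leaves only the
diagonals `x = y` and `a = b`, which are elementary divisor sums, and gives
`12 ∑_{k + l = n} σ₁(k) σ₁(l) = 5 σ₃(n) + (1 - 6 n) σ₁(n)`: the coefficient of `qⁿ` in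
`12 δP = P² - Q`.
-/

open Finset ArithmeticFunction
open scoped ArithmeticFunction.sigma

namespace Ramanujan

lemma sum_range_natCast (s : ℕ) : ∑ a ∈ range s, (a : ℚ) = s * (s - 1) / 2 := by
  induction s with
  | zero => simp
  | succ s ih => rw [sum_range_succ, ih]; push_cast; ring

lemma sum_range_natCast_sq (s : ℕ) :
    ∑ a ∈ range s, (a : ℚ) ^ 2 = s * (s - 1) * (2 * s - 1) / 6 := by
  induction s with
  | zero => simp
  | succ s ih => rw [sum_range_succ, ih]; push_cast; ring

lemma sum_Ico_one_sq_sub_mul_add_sq (s : ℕ) :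
    ∑ a ∈ Ico 1 s, ((s : ℚ) ^ 2 - s * a + a ^ 2) = s * (s - 1) * (5 * s - 1) / 6 := by
  rcases Nat.eq_zero_or_pos s with rfl | hs
  · simp
  have hrange := calc
    ∑ a ∈ range s, ((s : ℚ) ^ 2 - s * a + a ^ 2)
      = s * s ^ 2 - s * ∑ a ∈ range s, (a : ℚ) + ∑ a ∈ range s, (a : ℚ) ^ 2 := by
        rw [sum_add_distrib, sum_sub_distrib, sum_const, card_range, nsmul_eq_mul, mul_sum]
    _ = s * (s - 1) * (5 * s - 1) / 6 + s ^ 2 := by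
        rw [sum_range_natCast, sum_range_natCast_sq]; ring
  rw [sum_range_eq_add_Ico _ hs] at hrange
  linear_combination hrange

lemma sigma_eq_sum_divisorsAntidiagonal {R : Type*} [CommSemiring R] (k n : ℕ) :
    (σ k n : R) = ∑ p ∈ n.divisorsAntidiagonal, (p.1 : R) ^ k := by
  rw [sigma_apply, Nat.sum_divisorsAntidiagonal fun d _ => (d : R) ^ k]
  push_cast
  rfl

theorem sum_eq_sum_filter_eq_add_two_nsmul {α β M : Type*} [LinearOrder β] [AddCommMonoid M]
    {s : Finset α} {e : α → α} (he : ∀ a ∈ s, e a ∈ s) (hee : ∀ a, e (e a) = a)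
    {u w : α → β} (hu : ∀ a, u (e a) = w a) {f : α → M} (hf : ∀ a, f (e a) = f a) :
    ∑ a ∈ s, f a = ∑ a ∈ s with u a = w a, f a + 2 • ∑ a ∈ s with w a < u a, f a := by
  have hw : ∀ a, w (e a) = u a := fun a => by rw [← hu, hee]
  have hswap : ∑ a ∈ s with u a < w a, f a = ∑ a ∈ s with w a < u a, f a :=
    sum_nbij' e e (by simp_all) (by simp_all) (fun a _ => hee a) (fun a _ => hee a)
      (fun a _ => (hf a).symm)
  have hlt : s.filter (fun a => u a ≠ w a ∧ u a < w a) = s.filter (fun a => u a < w a) :=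
    filter_congr fun a _ => by grind
  have hgt : s.filter (fun a => u a ≠ w a ∧ ¬u a < w a) = s.filter (fun a => w a < u a) :=
    filter_congr fun a _ => by grind
  rw [← sum_filter_add_sum_filter_not s (fun a => u a = w a),
    ← sum_filter_add_sum_filter_not (s.filter fun a => u a ≠ w a) (fun a => u a < w a),
    filter_filter, filter_filter, hlt, hgt, hswap, two_nsmul]

/-- `((a, x), (b, y))` stands for the representation `n = a x + b y`. -/
def quadruples (n : ℕ) : Finset ((ℕ × ℕ) × (ℕ × ℕ)) :=
  ((Icc 1 n ×ˢ Icc 1 n) ×ˢ (Icc 1 n ×ˢ Icc 1 n)).filter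
    fun q => q.1.1 * q.1.2 + q.2.1 * q.2.2 = n

@[simp]
lemma mem_quadruples {n a x b y : ℕ} :
    ((a, x), (b, y)) ∈ quadruples n ↔ 0 < a ∧ 0 < x ∧ 0 < b ∧ 0 < y ∧ a * x + b * y = n := by
  simp only [quadruples, mem_filter, mem_product, mem_Icc]
  constructor
  · rintro ⟨⟨⟨⟨ha, -⟩, hx, -⟩, ⟨hb, -⟩, hy, -⟩, h⟩
    exact ⟨ha, hx, hb, hy, h⟩
  · rintro ⟨ha, hx, hb, hy, rfl⟩
    refine ⟨⟨⟨⟨ha, ?_⟩, hx, ?_⟩, ⟨hb, ?_⟩, hy, ?_⟩, rfl⟩ <;> nlinarith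

lemma swap_mem_quadruples {n : ℕ} {q : (ℕ × ℕ) × (ℕ × ℕ)} (hq : q ∈ quadruples n) :
    q.swap ∈ quadruples n := by
  obtain ⟨⟨a, x⟩, b, y⟩ := q
  simp only [Prod.swap_prod_mk, mem_quadruples] at hq ⊢
  omega

theorem sum_antidiagonal_sigma_mul_sigma {R : Type*} [CommSemiring R] (k l n : ℕ) :
    ∑ p ∈ antidiagonal n, (σ k p.1 : R) * σ l p.2 =
      ∑ q ∈ quadruples n, (q.1.1 : R) ^ k * (q.2.1 : R) ^ l := by
  simp only [sigma_eq_sum_divisorsAntidiagonal, sum_mul_sum, ← sum_product', sum_sigma']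
  refine sum_nbij' (fun r => r.2) (fun q => ⟨(q.1.1 * q.1.2, q.2.1 * q.2.2), q⟩) ?_ ?_ ?_ ?_ ?_
  · rintro ⟨⟨i, j⟩, ⟨a, x⟩, b, y⟩ hr
    simp only [mem_sigma, HasAntidiagonal.mem_antidiagonal, mem_product,
      Nat.mem_divisorsAntidiagonal] at hr
    simp only [mem_quadruples]
    obtain ⟨rfl, ⟨rfl, hi⟩, rfl, hj⟩ := hr
    simp only [ne_eq, mul_eq_zero, not_or] at hi hj
    omega
  · rintro ⟨⟨a, x⟩, b, y⟩ hq
    simp only [mem_quadruples] at hq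
    simp only [mem_sigma, HasAntidiagonal.mem_antidiagonal, mem_product,
      Nat.mem_divisorsAntidiagonal]
    obtain ⟨ha, hx, hb, hy, rfl⟩ := hq
    refine ⟨rfl, ⟨trivial, ?_⟩, trivial, ?_⟩ <;> positivity
  · rintro ⟨⟨i, j⟩, ⟨a, x⟩, b, y⟩ hr
    simp only [mem_sigma, HasAntidiagonal.mem_antidiagonal, mem_product,
      Nat.mem_divisorsAntidiagonal] at hr
    simp [hr]
  · exact fun _ _ => rfl
  · exact fun _ _ => rfl

section Parametrizations

variable {M : Type*} [AddCommMonoid M] {n : ℕ}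

lemma sum_quadruples_filter_cofactor_eq (g : (ℕ × ℕ) × (ℕ × ℕ) → M) :
    ∑ q ∈ quadruples n with q.1.2 = q.2.2, g q =
      ∑ p ∈ n.divisorsAntidiagonal, ∑ a ∈ Ico 1 p.1, g ((a, p.2), (p.1 - a, p.2)) := by
  rw [sum_sigma']
  refine sum_nbij' (fun q => ⟨(q.1.1 + q.2.1, q.1.2), q.1.1⟩)
    (fun r => ((r.2, r.1.2), (r.1.1 - r.2, r.1.2))) ?_ ?_ ?_ ?_ ?_
  · rintro ⟨⟨a, x⟩, b, y⟩ hq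
    simp only [mem_filter, mem_quadruples] at hq
    obtain ⟨⟨ha, hx, hb, -, rfl⟩, rfl⟩ := hq
    simp only [mem_sigma, Nat.mem_divisorsAntidiagonal, mem_Ico]
    exact ⟨⟨add_mul a b x, by positivity⟩, ha, by omega⟩
  · rintro ⟨⟨s, x⟩, a⟩ hr
    simp only [mem_sigma, Nat.mem_divisorsAntidiagonal, mem_Ico] at hr
    obtain ⟨c, rfl⟩ := Nat.exists_eq_add_of_le hr.2.2.le
    simp only [mem_filter, mem_quadruples, Nat.add_sub_cancel_left]
    grind
  · rintro ⟨⟨a, x⟩, b, y⟩ hq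
    simp only [mem_filter] at hq
    simp [hq.2]
  · rintro ⟨⟨s, x⟩, a⟩ hr
    simp only [mem_sigma, mem_Ico] at hr
    simp [Nat.add_sub_cancel' hr.2.2.le]
  · rintro ⟨⟨a, x⟩, b, y⟩ hq
    simp only [mem_filter] at hq
    simp [hq.2]

lemma sum_quadruples_filter_factor_eq (g : (ℕ × ℕ) × (ℕ × ℕ) → M) :
    ∑ q ∈ quadruples n with q.2.1 = q.1.1, g q =
      ∑ p ∈ n.divisorsAntidiagonal, ∑ x ∈ Ico 1 p.2, g ((p.1, x), (p.1, p.2 - x)) := by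
  rw [sum_sigma']
  refine sum_nbij' (fun q => ⟨(q.1.1, q.1.2 + q.2.2), q.1.2⟩)
    (fun r => ((r.1.1, r.2), (r.1.1, r.1.2 - r.2))) ?_ ?_ ?_ ?_ ?_
  · rintro ⟨⟨a, x⟩, b, y⟩ hq
    simp only [mem_filter, mem_quadruples] at hq
    obtain ⟨⟨ha, hx, -, hy, rfl⟩, rfl⟩ := hq
    simp only [mem_sigma, Nat.mem_divisorsAntidiagonal, mem_Ico]
    exact ⟨⟨mul_add _ x y, by positivity⟩, hx, by omega⟩
  · rintro ⟨⟨d, m⟩, x⟩ hr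
    simp only [mem_sigma, Nat.mem_divisorsAntidiagonal, mem_Ico] at hr
    obtain ⟨y, rfl⟩ := Nat.exists_eq_add_of_le hr.2.2.le
    simp only [mem_filter, mem_quadruples, Nat.add_sub_cancel_left]
    grind
  · rintro ⟨⟨a, x⟩, b, y⟩ hq
    simp only [mem_filter] at hq
    simp [hq.2]
  · rintro ⟨⟨d, m⟩, x⟩ hr
    simp only [mem_sigma, mem_Ico] at hr
    simp [Nat.add_sub_cancel' hr.2.2.le]
  · rintro ⟨⟨a, x⟩, b, y⟩ hq
    simp only [mem_filter] at hq
    simp [hq.2]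

lemma sum_quadruples_filter_factor_lt (g : ℕ → ℕ → M) :
    ∑ q ∈ quadruples n with q.1.1 < q.2.1, g q.1.1 q.2.1 =
      ∑ q ∈ quadruples n with q.2.2 < q.1.2, g q.1.1 (q.1.1 + q.2.1) := by
  refine sum_nbij' (fun q => ((q.1.1, q.1.2 + q.2.2), (q.2.1 - q.1.1, q.2.2)))
    (fun q => ((q.1.1, q.1.2 - q.2.2), (q.1.1 + q.2.1, q.2.2))) ?_ ?_ ?_ ?_ ?_
  · rintro ⟨⟨a, x⟩, b, y⟩ hq
    simp only [mem_filter, mem_quadruples] at hq ⊢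
    obtain ⟨c, rfl⟩ := Nat.exists_eq_add_of_le hq.2.le
    simp only [Nat.add_sub_cancel_left]
    grind
  · rintro ⟨⟨a, x⟩, b, y⟩ hq
    simp only [mem_filter, mem_quadruples] at hq ⊢
    obtain ⟨z, rfl⟩ := Nat.exists_eq_add_of_le hq.2.le
    simp only [Nat.add_sub_cancel_left]
    grind
  · rintro ⟨⟨a, x⟩, b, y⟩ hq
    simp only [mem_filter] at hq
    simp [Nat.add_sub_cancel' hq.2.le]
  · rintro ⟨⟨a, x⟩, b, y⟩ hq
    simp only [mem_filter] at hq
    simp [Nat.sub_add_cancel hq.2.le]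
  · rintro ⟨⟨a, x⟩, b, y⟩ hq
    simp only [mem_filter] at hq
    simp [Nat.add_sub_cancel' hq.2.le]

end Parametrizations

lemma twelve_mul_sum_quadruples_mul (n : ℕ) :
    12 * ∑ q ∈ quadruples n, (q.1.1 : ℚ) * q.2.1 =
      6 * ∑ q ∈ quadruples n with q.1.2 = q.2.2, ((q.1.1 : ℚ) ^ 2 + q.1.1 * q.2.1 + q.2.1 ^ 2) -
        6 * ∑ q ∈ quadruples n with q.2.1 = q.1.1,
          ((q.1.1 : ℚ) ^ 2 - q.1.1 * q.2.1 + q.2.1 ^ 2) := by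
  let v : (ℕ × ℕ) × (ℕ × ℕ) → ℚ := fun q => q.1.1 * q.2.1
  let w : ℕ → ℕ → ℚ := fun a b => a ^ 2 - a * b + b ^ 2
  let W : (ℕ × ℕ) × (ℕ × ℕ) → ℚ := fun q => w q.1.1 q.2.1
  have hv : ∑ q ∈ quadruples n, v q =
      ∑ q ∈ quadruples n with q.1.2 = q.2.2, v q + 2 • ∑ q ∈ quadruples n with q.2.2 < q.1.2, v q :=
    sum_eq_sum_filter_eq_add_two_nsmul (fun _ => swap_mem_quadruples) Prod.swap_swap
      (fun _ => rfl) (fun _ => mul_comm _ _)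
  have hWx : ∑ q ∈ quadruples n, W q =
      ∑ q ∈ quadruples n with q.1.2 = q.2.2, W q + 2 • ∑ q ∈ quadruples n with q.2.2 < q.1.2, W q :=
    sum_eq_sum_filter_eq_add_two_nsmul (fun _ => swap_mem_quadruples) Prod.swap_swap
      (fun _ => rfl) (fun _ => by simp only [W, w, Prod.fst_swap, Prod.snd_swap]; ring)
  have hWa : ∑ q ∈ quadruples n, W q =
      ∑ q ∈ quadruples n with q.2.1 = q.1.1, W q + 2 • ∑ q ∈ quadruples n with q.1.1 < q.2.1, W q :=
    sum_eq_sum_filter_eq_add_two_nsmul (fun _ => swap_mem_quadruples) Prod.swap_swap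
      (fun _ => rfl) (fun _ => by simp only [W, w, Prod.fst_swap, Prod.snd_swap]; ring)
  -- `w a (a + b) = w a b + 2 a b`: this is why the shear relates the `W`- and `v`-sums.
  have hshear : ∑ q ∈ quadruples n with q.1.1 < q.2.1, W q =
      ∑ q ∈ quadruples n with q.2.2 < q.1.2, (W q + 2 * v q) := by
    refine (sum_quadruples_filter_factor_lt w).trans (sum_congr rfl fun q _ => ?_)
    simp only [W, w, v]
    push_cast
    ring
  have hdiag :
      ∑ q ∈ quadruples n with q.1.2 = q.2.2, ((q.1.1 : ℚ) ^ 2 + q.1.1 * q.2.1 + q.2.1 ^ 2) =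
      ∑ q ∈ quadruples n with q.1.2 = q.2.2, (W q + 2 * v q) :=
    sum_congr rfl fun q _ => by simp only [W, w, v]; ring
  change _ = 6 * _ - 6 * ∑ q ∈ quadruples n with q.2.1 = q.1.1, W q
  rw [hdiag, sum_add_distrib, ← mul_sum]
  simp only [sum_add_distrib, ← mul_sum, nsmul_eq_mul] at hv hWx hWa hshear
  linear_combination 12 * hv + 6 * (hWx - hWa) - 12 * hshear

lemma sum_quadruples_filter_cofactor_eq_sq_add_mul_add_sq (n : ℕ) :
    ∑ q ∈ quadruples n with q.1.2 = q.2.2, ((q.1.1 : ℚ) ^ 2 + q.1.1 * q.2.1 + q.2.1 ^ 2) =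
      ∑ p ∈ n.divisorsAntidiagonal, (p.1 : ℚ) * (p.1 - 1) * (5 * p.1 - 1) / 6 := by
  rw [sum_quadruples_filter_cofactor_eq]
  refine sum_congr rfl fun p _ => ?_
  rw [← sum_Ico_one_sq_sub_mul_add_sq]
  refine sum_congr rfl fun a ha => ?_
  rw [Nat.cast_sub (mem_Ico.1 ha).2.le]
  ring

lemma sum_quadruples_filter_factor_eq_sq_sub_mul_add_sq (n : ℕ) :
    ∑ q ∈ quadruples n with q.2.1 = q.1.1, ((q.1.1 : ℚ) ^ 2 - q.1.1 * q.2.1 + q.2.1 ^ 2) =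
      ∑ p ∈ n.divisorsAntidiagonal, ((p.2 : ℚ) - 1) * p.1 ^ 2 := by
  rw [sum_quadruples_filter_factor_eq]
  refine sum_congr rfl fun p hp => ?_
  have : 1 ≤ p.2 := Nat.one_le_iff_ne_zero.2 (Nat.right_ne_zero_of_mem_divisorsAntidiagonal hp)
  simp only [sum_const, Nat.card_Ico, nsmul_eq_mul, Nat.cast_sub this, Nat.cast_one]
  ring

theorem twelve_mul_sum_antidiagonal_sigma_one_mul_sigma_one (n : ℕ) :
    12 * ∑ p ∈ antidiagonal n, (σ 1 p.1 : ℚ) * σ 1 p.2 = 5 * σ 3 n + (1 - 6 * n) * σ 1 n := by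
  rw [sum_antidiagonal_sigma_mul_sigma]
  simp only [pow_one, sigma_eq_sum_divisorsAntidiagonal]
  rw [twelve_mul_sum_quadruples_mul, sum_quadruples_filter_cofactor_eq_sq_add_mul_add_sq,
    sum_quadruples_filter_factor_eq_sq_sub_mul_add_sq, mul_sum, mul_sum, mul_sum, mul_sum,
    ← sum_sub_distrib, ← sum_add_distrib]
  refine sum_congr rfl fun p hp => ?_
  have hn : (p.1 : ℚ) * p.2 = n := by exact_mod_cast (Nat.mem_divisorsAntidiagonal.1 hp).1
  linear_combination (-6 * (p.1 : ℚ)) * hn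

end Ramanujan

open PowerSeries

/-- Ramanujan's functions `P, Q, R` as formal power series in `q`,
with `P(q) = 1 − 24∑ σ₁(n)qⁿ`, `Q(q) = 1 + 240∑ σ₃(n)qⁿ`,
satisfy `δP = (P²−Q)/12` where `δ = q d/dq`. -/
theorem ramanujan_P_ode :
    let P : PowerSeries ℚ :=
      PowerSeries.mk (fun n => if n = 0 then 1 else -24 * (ArithmeticFunction.sigma 1 n : ℚ))
    let Q : PowerSeries ℚ :=
      PowerSeries.mk (fun n => if n = 0 then 1 else 240 * (ArithmeticFunction.sigma 3 n : ℚ))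
    let δ : PowerSeries ℚ → PowerSeries ℚ :=
      fun f => PowerSeries.mk (fun n => (n : ℚ) * PowerSeries.coeff n f)
    δ P = PowerSeries.C (1 / 12 : ℚ) * (P ^ 2 - Q) := by
  intro P Q δ
  let L : ℕ → ℚ⟦X⟧ := fun k => mk fun n => (σ k n : ℚ)
  -- `σ k 0 = 0`, so the constant coefficients are carried by the `1`.
  have hP : P = 1 - 24 * L 1 := by
    ext (_ | n) <;> simp [P, L, ← map_ofNat C]
  have hQ : Q = 1 + 240 * L 3 := by
    ext (_ | n) <;> simp [Q, L, ← map_ofNat C]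
  have hPQ : P ^ 2 - Q = C 576 * (L 1 * L 1) - C 48 * L 1 - C 240 * L 3 := by
    simp only [hP, hQ, map_ofNat]
    ring
  ext n
  have key := Ramanujan.twelve_mul_sum_antidiagonal_sigma_one_mul_sigma_one n
  rw [hPQ, coeff_C_mul, map_sub, map_sub, coeff_C_mul, coeff_C_mul, coeff_C_mul, coeff_mul]
  simp only [δ, P, L, coeff_mk]
  split_ifs with hn
  · simp [hn]
  · linear_combination (-4) * key
end

section
/- If P, Q, R satisfy Ramanujan's differential system, then 4Q·δ²Q − 5(δQ)² = 960Δ where Δ = (Q³−R²)/1728. -/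
/-! `δ = q d/dq` is a derivation, so `δ²Q = δ((PQ − R)/3)` becomes a polynomial in `P, Q, R`
after substituting the system once more; in `4Q·δ²Q − 5(δQ)²` the terms involving `P` cancel. -/

section EulerDeriv

variable {𝕜 : Type*} [NontriviallyNormedField 𝕜]

noncomputable def eulerDeriv (f : 𝕜 → 𝕜) (x : 𝕜) : 𝕜 := x * deriv f x

variable {f g : 𝕜 → 𝕜} {x : 𝕜}

theorem eulerDeriv_mul (hf : DifferentiableAt 𝕜 f x) (hg : DifferentiableAt 𝕜 g x) :
    eulerDeriv (fun t => f t * g t) x = eulerDeriv f x * g x + f x * eulerDeriv g x := by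
  simp only [eulerDeriv, deriv_fun_mul hf hg]
  ring

theorem eulerDeriv_sub (hf : DifferentiableAt 𝕜 f x) (hg : DifferentiableAt 𝕜 g x) :
    eulerDeriv (fun t => f t - g t) x = eulerDeriv f x - eulerDeriv g x := by
  simp only [eulerDeriv, deriv_fun_sub hf hg]
  ring

theorem eulerDeriv_div_const (c : 𝕜) :
    eulerDeriv (fun t => f t / c) x = eulerDeriv f x / c := by
  simp only [eulerDeriv, deriv_div_const]
  ring

theorem eulerDeriv_eulerDeriv_of_ramanujan {P Q R : 𝕜 → 𝕜}
    (hP : DifferentiableAt 𝕜 P x) (hQ : DifferentiableAt 𝕜 Q x) (hR : DifferentiableAt 𝕜 R x)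
    (h1 : eulerDeriv P x = (P x ^ 2 - Q x) / 12)
    (h2 : eulerDeriv Q = fun t => (P t * Q t - R t) / 3)
    (h3 : eulerDeriv R x = (P x * R x - Q x ^ 2) / 2) :
    eulerDeriv (eulerDeriv Q) x =
      ((P x ^ 2 - Q x) / 12 * Q x + P x * ((P x * Q x - R x) / 3)
        - (P x * R x - Q x ^ 2) / 2) / 3 := by
  rw [h2, eulerDeriv_div_const, eulerDeriv_sub (hP.fun_mul hQ) hR, eulerDeriv_mul hP hQ, h1, h3,
    congrFun h2 x]

end EulerDeriv

/-- If `P, Q, R` satisfy Ramanujan's system, then `4Q·δ²Q − 5(δQ)² = 960Δ`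
where `Δ = (Q³−R²)/1728` and `δ = q d/dq`. -/
theorem rankin_Q_identity (P Q R : ℂ → ℂ)
    (hP : ContDiff ℂ ⊤ P) (hQ : ContDiff ℂ ⊤ Q) (hR : ContDiff ℂ ⊤ R)
    (h1 : ∀ q : ℂ, q * deriv P q = (P q ^ 2 - Q q) / 12)
    (h2 : ∀ q : ℂ, q * deriv Q q = (P q * Q q - R q) / 3)
    (h3 : ∀ q : ℂ, q * deriv R q = (P q * R q - Q q ^ 2) / 2) :
    ∀ q : ℂ,
      4 * Q q * (q * deriv (fun t => t * deriv Q t) q) - 5 * (q * deriv Q q) ^ 2 =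
        960 * ((Q q ^ 3 - R q ^ 2) / 1728) := by
  intro q
  have hδδQ := eulerDeriv_eulerDeriv_of_ramanujan (x := q)
    (hP.differentiable (by simp)).differentiableAt (hQ.differentiable (by simp)).differentiableAt
    (hR.differentiable (by simp)).differentiableAt (h1 q) (funext h2) (h3 q)
  change 4 * Q q * eulerDeriv (eulerDeriv Q) q - 5 * (q * deriv Q q) ^ 2 = _
  rw [hδδQ, h2 q]
  ring
end

section
/- If y is a solution of the Chazy equation y''' = 2yy'' − 3(y')² and Δ is a nonvanishing function with y = (1/2)·Δ'/Δ, then Δ satisfies Rankin's equation 2Δ''''Δ³ − 10Δ'''Δ'Δ² − 3(Δ'')²Δ² + 24Δ''(Δ')²Δ − 13(Δ')⁴ = 0. -/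
/-!
Writing `Δ' = 2yΔ` and differentiating repeatedly, every derivative `Δ⁽ᵏ⁾` is `Pₖ Δ` with `Pₖ` a
differential polynomial in `y` (`Pₖ₊₁ = Pₖ' + 2yPₖ`). Substituting `P₁, …, P₄` into Rankin's
expression gives `4Δ⁴ (y''' − 2yy'' + 3y'²)`, which vanishes by the Chazy equation.
-/

theorem deriv_mul_of_deriv_eq_mul {𝕜 : Type*} [NontriviallyNormedField 𝕜] {f g Δ : 𝕜 → 𝕜}
    (hΔ : Differentiable 𝕜 Δ) (hΔ' : deriv Δ = fun z => f z * Δ z) (hg : Differentiable 𝕜 g) :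
    deriv (fun z => g z * Δ z) = fun z => (deriv g z + g z * f z) * Δ z := by
  funext z
  rw [deriv_fun_mul (hg z) (hΔ z), hΔ']
  ring

theorem rankin_expr_eq_mul_chazy {R : Type*} [CommRing R] (y y₁ y₂ y₃ Δ : R) :
    2 * ((2 * y₃ + 16 * y * y₂ + 12 * y₁ ^ 2 + 48 * y ^ 2 * y₁ + 16 * y ^ 4) * Δ) * Δ ^ 3
      - 10 * ((2 * y₂ + 12 * y * y₁ + 8 * y ^ 3) * Δ) * (2 * y * Δ) * Δ ^ 2
      - 3 * ((2 * y₁ + 4 * y ^ 2) * Δ) ^ 2 * Δ ^ 2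
      + 24 * ((2 * y₁ + 4 * y ^ 2) * Δ) * (2 * y * Δ) ^ 2 * Δ
      - 13 * (2 * y * Δ) ^ 4
      = 4 * Δ ^ 4 * (y₃ - (2 * y * y₂ - 3 * y₁ ^ 2)) := by
  ring

theorem rankin_delta_equation_general (y Δ : ℂ → ℂ)
    (hy : ContDiff ℂ ⊤ y) (hΔ : ContDiff ℂ ⊤ Δ)
    (hrel : ∀ z : ℂ, 2 * y z * Δ z = deriv Δ z)
    (hchazy : ∀ z : ℂ,
      deriv (deriv (deriv y)) z = 2 * y z * deriv (deriv y) z - 3 * (deriv y z) ^ 2) :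
    ∀ z : ℂ,
      2 * deriv (deriv (deriv (deriv Δ))) z * (Δ z) ^ 3
        - 10 * deriv (deriv (deriv Δ)) z * deriv Δ z * (Δ z) ^ 2
        - 3 * (deriv (deriv Δ) z) ^ 2 * (Δ z) ^ 2
        + 24 * deriv (deriv Δ) z * (deriv Δ z) ^ 2 * Δ z
        - 13 * (deriv Δ z) ^ 4 = 0 := by
  have hΔd : Differentiable ℂ Δ := hΔ.differentiable (by simp)
  have hy₀ : Differentiable ℂ y := hy.differentiable (by simp)
  have hy₁ : Differentiable ℂ (deriv y) := by fun_prop (disch := simp)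
  have hy₂ : Differentiable ℂ (deriv (deriv y)) := by fun_prop (disch := simp)
  have h₁ : deriv Δ = fun z => 2 * y z * Δ z := funext fun z => (hrel z).symm
  have h₂ : deriv (deriv Δ) = fun z => (2 * deriv y z + 4 * y z ^ 2) * Δ z := by
    rw [h₁, deriv_mul_of_deriv_eq_mul hΔd h₁ (by fun_prop)]
    funext z
    simp (disch := fun_prop) only [deriv_const_mul_field']
    ring
  have h₃ : deriv (deriv (deriv Δ)) =
      fun z => (2 * deriv (deriv y) z + 12 * y z * deriv y z + 8 * y z ^ 3) * Δ z := by
    rw [h₂, deriv_mul_of_deriv_eq_mul hΔd h₁ (by fun_prop)]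
    funext z
    simp (disch := fun_prop) only [deriv_fun_add, deriv_fun_mul, deriv_fun_pow, deriv_const]
    ring
  have h₄ : deriv (deriv (deriv (deriv Δ))) = fun z => (2 * deriv (deriv (deriv y)) z
      + 16 * y z * deriv (deriv y) z + 12 * deriv y z ^ 2 + 48 * y z ^ 2 * deriv y z
      + 16 * y z ^ 4) * Δ z := by
    rw [h₃, deriv_mul_of_deriv_eq_mul hΔd h₁ (by fun_prop)]
    funext z
    simp (disch := fun_prop) only [deriv_fun_add, deriv_fun_mul, deriv_fun_pow, deriv_const]
    ring
  intro z
  rw [h₄, h₃, h₂, h₁, rankin_expr_eq_mul_chazy, hchazy, sub_self, mul_zero]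

/-- If `y` solves the Chazy equation and `Δ` is nonvanishing with `y = (1/2)Δ'/Δ`
(i.e. `2yΔ = Δ'`), then `Δ` satisfies Rankin's fourth-order equation. -/
theorem rankin_delta_equation (y Δ : ℂ → ℂ)
    (hy : ContDiff ℂ ⊤ y) (hΔ : ContDiff ℂ ⊤ Δ)
    (hΔ0 : ∀ z : ℂ, Δ z ≠ 0)
    (hrel : ∀ z : ℂ, 2 * y z * Δ z = deriv Δ z)
    (hchazy : ∀ z : ℂ,
      deriv (deriv (deriv y)) z = 2 * y z * deriv (deriv y) z - 3 * (deriv y z) ^ 2) :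
    ∀ z : ℂ,
      2 * deriv (deriv (deriv (deriv Δ))) z * (Δ z) ^ 3
        - 10 * deriv (deriv (deriv Δ)) z * deriv Δ z * (Δ z) ^ 2
        - 3 * (deriv (deriv Δ) z) ^ 2 * (Δ z) ^ 2
        + 24 * deriv (deriv Δ) z * (deriv Δ z) ^ 2 * Δ z
        - 13 * (deriv Δ z) ^ 4 = 0 :=
  rankin_delta_equation_general y Δ hy hΔ hrel hchazy
end

section
/- For every integer n ≥ 1: n²(n−1)σ₁(n) + ∑_{m=1}^{n−1} 12m(5m−3n)σ₁(m)σ₁(n−m) = 0, where σ₁(k) = ∑_{d|k} d. -/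
/-!
Liouville's elementary method. Writing `σ₁(m) = ∑_{ab = m} b`, the convolution sum becomes the
sum of `F = 12ab(5ab - 3n)bd` over the positive solutions of `ab + cd = n`. Split these
according to `c < a`, `a < c`, `a = c`; the swap `(a, b) ↔ (c, d)` exchanges the first two
classes, and on `c < a` the symmetrised `F + F ∘ swap` equals `W - W ∘ μ + V - V ∘ T`, where
`μ (a, b, c, d) = (b + d, c, b, a - c)` is Liouville's involution of `{c < a}`,
`T (a, b, c, d) = (b, a, d, c)` permutes all solutions and `V` is swap-invariant. The `W`-part
cancels and the `V`-part collapses to the diagonal `a = c`, where for each factorisation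
`n = ef` one sums a cubic in `b` over `0 < b < f`; what is left is `-n²(n - 1)σ₁(n)`.
-/

open Finset ArithmeticFunction
open scoped ArithmeticFunction.sigma

namespace ArithmeticFunction

theorem sigma_eq_sum_divisorsAntidiagonal_fst {R : Type*} [Semiring R] (k n : ℕ) :
    (σ k n : R) = ∑ p ∈ n.divisorsAntidiagonal, (p.1 : R) ^ k := by
  rw [sigma_apply, Nat.sum_divisorsAntidiagonal fun i _ => (i : R) ^ k]
  push_cast
  rfl

theorem sigma_eq_sum_divisorsAntidiagonal_snd {R : Type*} [Semiring R] (k n : ℕ) :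
    (σ k n : R) = ∑ p ∈ n.divisorsAntidiagonal, (p.2 : R) ^ k := by
  rw [sigma_apply, Nat.sum_divisorsAntidiagonal' fun _ j => (j : R) ^ k]
  push_cast
  rfl

end ArithmeticFunction

namespace ChazySigma

def twoProdReps (n : ℕ) : Finset ((ℕ × ℕ) × (ℕ × ℕ)) :=
  {q ∈ (range (n + 1) ×ˢ range (n + 1)) ×ˢ (range (n + 1) ×ˢ range (n + 1)) |
    q.1.1 * q.1.2 + q.2.1 * q.2.2 = n ∧ 0 < q.1.1 ∧ 0 < q.1.2 ∧ 0 < q.2.1 ∧ 0 < q.2.2}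

theorem mem_twoProdReps {n a b c d : ℕ} :
    ((a, b), (c, d)) ∈ twoProdReps n ↔ a * b + c * d = n ∧ 0 < a ∧ 0 < b ∧ 0 < c ∧ 0 < d := by
  simp only [twoProdReps, mem_filter, mem_product, mem_range, and_iff_right_iff_imp]
  rintro ⟨rfl, ha, hb, hc, hd⟩
  refine ⟨⟨?_, ?_⟩, ?_, ?_⟩ <;> nlinarith

theorem sum_twoProdReps_eq_sum_lt_add_sum_eq {M : Type*} [AddCommMonoid M] (n : ℕ)
    (f : (ℕ × ℕ) × (ℕ × ℕ) → M) :
    ∑ q ∈ twoProdReps n, f q =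
      ∑ q ∈ twoProdReps n with q.2.1 < q.1.1, (f q + f q.swap) +
        ∑ q ∈ twoProdReps n with q.1.1 = q.2.1, f q := by
  have hswap : ∑ q ∈ twoProdReps n with q.1.1 < q.2.1, f q =
      ∑ q ∈ twoProdReps n with q.2.1 < q.1.1, f q.swap := by
    refine sum_nbij' Prod.swap Prod.swap ?_ ?_ (fun _ _ => rfl) (fun _ _ => rfl)
      (fun _ _ => rfl) <;>
    · rintro ⟨⟨a, b⟩, ⟨c, d⟩⟩
      simp only [mem_filter, Prod.swap_prod_mk, mem_twoProdReps]
      omega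
  have htrichotomy : ∑ q ∈ twoProdReps n, f q =
      ∑ q ∈ twoProdReps n with q.2.1 < q.1.1, f q + ∑ q ∈ twoProdReps n with q.1.1 < q.2.1, f q +
        ∑ q ∈ twoProdReps n with q.1.1 = q.2.1, f q := by
    simp only [sum_filter, ← sum_add_distrib]
    refine sum_congr rfl fun q _ => ?_
    rcases lt_trichotomy q.1.1 q.2.1 with h | h | h
    · simp [h, h.ne, h.not_gt]
    · simp [h]
    · simp [h, h.ne', h.not_gt]
  rw [htrichotomy, hswap, sum_add_distrib]

def liouvilleInvolution : (ℕ × ℕ) × (ℕ × ℕ) → (ℕ × ℕ) × (ℕ × ℕ)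
  | ((a, b), (c, d)) => ((b + d, c), (b, a - c))

theorem liouvilleInvolution_mem {n : ℕ} {q : (ℕ × ℕ) × (ℕ × ℕ)}
    (hq : q ∈ twoProdReps n) (hlt : q.2.1 < q.1.1) :
    liouvilleInvolution q ∈ twoProdReps n ∧
      (liouvilleInvolution q).2.1 < (liouvilleInvolution q).1.1 := by
  obtain ⟨⟨a, b⟩, ⟨c, d⟩⟩ := q
  dsimp only at hlt
  obtain ⟨k, rfl⟩ := Nat.exists_eq_add_of_lt hlt
  simp only [mem_twoProdReps, liouvilleInvolution] at hq ⊢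
  refine ⟨⟨?_, by omega, hq.2.2.2.1, hq.2.2.1, by omega⟩, by omega⟩
  rw [← hq.1, add_assoc, Nat.add_sub_cancel_left]
  ring

theorem liouvilleInvolution_liouvilleInvolution {q : (ℕ × ℕ) × (ℕ × ℕ)} (hle : q.2.1 ≤ q.1.1) :
    liouvilleInvolution (liouvilleInvolution q) = q := by
  obtain ⟨⟨a, b⟩, ⟨c, d⟩⟩ := q
  dsimp only at hle
  simp only [liouvilleInvolution, Nat.add_sub_cancel' hle, Nat.add_sub_cancel_left]

theorem sum_liouvilleInvolution {M : Type*} [AddCommMonoid M] (n : ℕ)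
    (f : (ℕ × ℕ) × (ℕ × ℕ) → M) :
    ∑ q ∈ twoProdReps n with q.2.1 < q.1.1, f (liouvilleInvolution q) =
      ∑ q ∈ twoProdReps n with q.2.1 < q.1.1, f q := by
  have hmaps : ∀ q ∈ {q ∈ twoProdReps n | q.2.1 < q.1.1},
      liouvilleInvolution q ∈ {q ∈ twoProdReps n | q.2.1 < q.1.1} := fun q hq =>
    mem_filter.2 (liouvilleInvolution_mem (mem_filter.1 hq).1 (mem_filter.1 hq).2)
  exact sum_nbij' _ _ hmaps hmaps
    (fun q hq => liouvilleInvolution_liouvilleInvolution (mem_filter.1 hq).2.le)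
    (fun q hq => liouvilleInvolution_liouvilleInvolution (mem_filter.1 hq).2.le)
    (fun _ _ => rfl)

theorem sum_twoProdReps_map_swap {M : Type*} [AddCommMonoid M] (n : ℕ)
    (f : (ℕ × ℕ) × (ℕ × ℕ) → M) :
    ∑ q ∈ twoProdReps n, f (Prod.map Prod.swap Prod.swap q) = ∑ q ∈ twoProdReps n, f q := by
  refine sum_nbij' _ (Prod.map Prod.swap Prod.swap) ?_ ?_ (fun _ _ => rfl) (fun _ _ => rfl)
    (fun _ _ => rfl) <;>
  · rintro ⟨⟨a, b⟩, ⟨c, d⟩⟩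
    simp only [Prod.map_apply, Prod.swap_prod_mk, mem_twoProdReps]
    intro h
    refine ⟨?_, h.2.2.1, h.2.1, h.2.2.2.2, h.2.2.2.1⟩
    rw [← h.1]
    ring

theorem sum_twoProdReps_diag {M : Type*} [AddCommMonoid M] (n : ℕ)
    (f : (ℕ × ℕ) × (ℕ × ℕ) → M) :
    ∑ q ∈ twoProdReps n with q.1.1 = q.2.1, f q =
      ∑ p ∈ n.divisorsAntidiagonal, ∑ b ∈ Ico 1 p.2, f ((p.1, b), (p.1, p.2 - b)) := by
  rw [← sum_sigma _ _ fun x : (_ : ℕ × ℕ) × ℕ => f ((x.1.1, x.2), (x.1.1, x.1.2 - x.2))]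
  refine sum_nbij' (fun q => ⟨(q.1.1, q.1.2 + q.2.2), q.1.2⟩)
    (fun x => ((x.1.1, x.2), (x.1.1, x.1.2 - x.2))) ?_ ?_ ?_ ?_ ?_
  · rintro ⟨⟨a, b⟩, ⟨c, d⟩⟩
    simp only [mem_filter, mem_twoProdReps, mem_sigma, Nat.mem_divisorsAntidiagonal, mem_Ico]
    rintro ⟨⟨hn, ha, hb, hc, hd⟩, rfl⟩
    have hab := Nat.mul_pos ha hb
    exact ⟨⟨by rw [← hn]; ring, by omega⟩, hb, by omega⟩
  · rintro ⟨⟨e, k⟩, b⟩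
    simp only [mem_filter, mem_twoProdReps, mem_sigma, Nat.mem_divisorsAntidiagonal, mem_Ico]
    rintro ⟨⟨rfl, hn⟩, hb, hbf⟩
    have he : 0 < e := Nat.pos_of_ne_zero (left_ne_zero_of_mul hn)
    refine ⟨⟨?_, he, hb, he, by omega⟩, trivial⟩
    rw [← mul_add, Nat.add_sub_cancel' hbf.le]
  · rintro ⟨⟨a, b⟩, ⟨c, d⟩⟩
    simp only [mem_filter, mem_twoProdReps]
    rintro ⟨-, rfl⟩
    simp
  · rintro ⟨⟨e, k⟩, b⟩
    simp only [mem_sigma, mem_Ico]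
    rintro ⟨-, -, hbf⟩
    simp [Nat.add_sub_cancel' hbf.le]
  · rintro ⟨⟨a, b⟩, ⟨c, d⟩⟩
    simp only [mem_filter, mem_twoProdReps]
    rintro ⟨-, rfl⟩
    simp

theorem two_nsmul_sum_twoProdReps {G : Type*} [AddCommGroup G] (n : ℕ)
    (f w v : (ℕ × ℕ) × (ℕ × ℕ) → G) (hv : ∀ q, v q.swap = v q)
    (hkey : ∀ q ∈ twoProdReps n, q.2.1 < q.1.1 →
      f q + f q.swap =
        w q - w (liouvilleInvolution q) + (v q - v (Prod.map Prod.swap Prod.swap q))) :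
    2 • ∑ q ∈ twoProdReps n, f q =
      ∑ q ∈ twoProdReps n with q.1.1 = q.2.1,
        (2 • f q - v q + v (Prod.map Prod.swap Prod.swap q)) := by
  have hf := sum_twoProdReps_eq_sum_lt_add_sum_eq n f
  rw [sum_congr rfl fun q hq => hkey q (mem_filter.1 hq).1 (mem_filter.1 hq).2] at hf
  simp only [sum_add_distrib, sum_sub_distrib, sum_liouvilleInvolution, sub_self, zero_add] at hf
  have hv' := sum_twoProdReps_eq_sum_lt_add_sum_eq n v
  have hvT := sum_twoProdReps_eq_sum_lt_add_sum_eq n (fun q => v (Prod.map Prod.swap Prod.swap q))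
  have hvT_swap : ∀ q : (ℕ × ℕ) × (ℕ × ℕ),
      v (Prod.map Prod.swap Prod.swap q.swap) = v (Prod.map Prod.swap Prod.swap q) := fun q =>
    hv (Prod.map Prod.swap Prod.swap q)
  simp only [hv, hvT_swap, sum_add_distrib] at hv' hvT
  rw [sum_twoProdReps_map_swap] at hvT
  simp only [sum_add_distrib, sum_sub_distrib, ← smul_sum]
  linear_combination (norm := module) 2 • hf - hv' + hvT

theorem filter_twoProdReps_mul_eq {n m : ℕ} (hm : m ∈ Ico 1 n) :
    {q ∈ twoProdReps n | q.1.1 * q.1.2 = m} =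
      m.divisorsAntidiagonal ×ˢ (n - m).divisorsAntidiagonal := by
  ext ⟨⟨a, b⟩, ⟨c, d⟩⟩
  simp only [mem_Ico] at hm
  simp only [mem_filter, mem_twoProdReps, mem_product, Nat.mem_divisorsAntidiagonal]
  constructor
  · rintro ⟨⟨hn, -, -, hc, hd⟩, rfl⟩
    have hcd := Nat.mul_pos hc hd
    generalize c * d = y at hn hcd
    exact ⟨⟨rfl, by omega⟩, by omega, by omega⟩
  · rintro ⟨⟨rfl, hab⟩, hcd, hnm⟩
    obtain ⟨ha, hb⟩ := Nat.mul_ne_zero_iff.1 hab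
    obtain ⟨hc, hd⟩ := Nat.mul_ne_zero_iff.1 (hcd ▸ hnm)
    generalize a * b = x at hm hcd
    exact ⟨⟨by omega, by omega, by omega, by omega, by omega⟩, rfl⟩

theorem sum_mul_sigma_mul_sigma {R : Type*} [CommSemiring R] (n : ℕ) (g : ℕ → R) :
    ∑ m ∈ Ico 1 n, g m * σ 1 m * σ 1 (n - m) =
      ∑ q ∈ twoProdReps n, g (q.1.1 * q.1.2) * q.1.2 * q.2.2 := by
  have hmaps : ∀ q ∈ twoProdReps n, q.1.1 * q.1.2 ∈ Ico 1 n := by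
    rintro ⟨⟨a, b⟩, ⟨c, d⟩⟩ hq
    obtain ⟨rfl, ha, hb, hc, hd⟩ := mem_twoProdReps.1 hq
    exact mem_Ico.2 ⟨Nat.mul_pos ha hb, Nat.lt_add_of_pos_right (Nat.mul_pos hc hd)⟩
  rw [← sum_fiberwise_of_maps_to hmaps]
  refine sum_congr rfl fun m hm => ?_
  rw [filter_twoProdReps_mul_eq hm, sigma_eq_sum_divisorsAntidiagonal_snd,
    sigma_eq_sum_divisorsAntidiagonal_snd, mul_assoc, sum_mul_sum, mul_sum, sum_product]
  refine sum_congr rfl fun p hp => ?_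
  rw [mul_sum]
  refine sum_congr rfl fun r _ => ?_
  rw [(Nat.mem_divisorsAntidiagonal.1 hp).1]
  simp only [pow_one, mul_assoc]

def chazyTerm : (ℕ × ℕ) × (ℕ × ℕ) → ℤ
  | ((a, b), (c, d)) => 12 * ((a : ℤ) * b) * (5 * (a * b) - 3 * (a * b + c * d)) * b * d

/-- `chazyW` and `chazyV` solve the linear system obtained by comparing coefficients in
`chazyTerm_add_chazyTerm_swap`; the solution is not unique. -/
def chazyW : (ℕ × ℕ) × (ℕ × ℕ) → ℤ
  | ((a, b), (c, d)) =>
    2 * c ^ 2 * d ^ 4 - 2 * c ^ 4 * d ^ 2 + 12 * b * c ^ 2 * d ^ 3 + 4 * b * c ^ 4 * d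
      - 2 * b ^ 2 * c ^ 4 - 4 * b ^ 3 * c ^ 2 * d + 12 * a * c ^ 3 * d ^ 2
      - 16 * a * b * c * d ^ 3 - 8 * a * b * c ^ 3 * d - 12 * a * b ^ 2 * c * d ^ 2
      - 12 * (a : ℤ) ^ 2 * c ^ 2 * d ^ 2

def chazyV : (ℕ × ℕ) × (ℕ × ℕ) → ℤ
  | ((a, b), (c, d)) =>
    -2 * c ^ 2 * d ^ 4 + 12 * b * c ^ 2 * d ^ 3 - 12 * b ^ 2 * c ^ 2 * d ^ 2
      + 16 * a * b * c * d ^ 3 - 36 * a * b ^ 2 * c * d ^ 2 + 16 * a * b ^ 3 * c * d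
      - 12 * a ^ 2 * b ^ 2 * d ^ 2 + 12 * a ^ 2 * b ^ 3 * d - 2 * (a : ℤ) ^ 2 * b ^ 4

theorem chazyV_swap (q : (ℕ × ℕ) × (ℕ × ℕ)) : chazyV q.swap = chazyV q := by
  obtain ⟨⟨a, b⟩, ⟨c, d⟩⟩ := q
  simp only [Prod.swap_prod_mk, chazyV]
  ring

theorem chazyTerm_add_chazyTerm_swap {q : (ℕ × ℕ) × (ℕ × ℕ)} (hle : q.2.1 ≤ q.1.1) :
    chazyTerm q + chazyTerm q.swap =
      chazyW q - chazyW (liouvilleInvolution q) +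
        (chazyV q - chazyV (Prod.map Prod.swap Prod.swap q)) := by
  obtain ⟨⟨a, b⟩, ⟨c, d⟩⟩ := q
  dsimp only at hle
  simp only [Prod.swap_prod_mk, Prod.map_apply, liouvilleInvolution, chazyTerm, chazyW, chazyV]
  push_cast [Nat.cast_sub hle]
  ring

theorem sum_Ico_one_cubic (c₀ c₁ c₂ c₃ : ℚ) {f : ℕ} (hf : 0 < f) :
    ∑ b ∈ Ico 1 f, (c₀ + c₁ * b + c₂ * b ^ 2 + c₃ * b ^ 3) =
      c₀ * (f - 1) + c₁ * (f * (f - 1) / 2) + c₂ * (f * (f - 1) * (2 * f - 1) / 6) +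
        c₃ * (f * (f - 1) / 2) ^ 2 := by
  induction f, hf using Nat.le_induction with
  | base => simp
  | succ f hf ih =>
    rw [sum_Ico_succ_top hf, ih]
    push_cast
    ring

theorem sum_Ico_one_chazy_diag (e : ℕ) {f : ℕ} (hf : 0 < f) :
    ∑ b ∈ Ico 1 f, (2 • chazyTerm ((e, b), (e, f - b)) - chazyV ((e, b), (e, f - b)) +
        chazyV (Prod.map Prod.swap Prod.swap ((e, b), (e, f - b)))) =
      2 * e ^ 2 * f ^ 3 - 2 * e ^ 2 * f ^ 4 + 2 * e ^ 4 * f ^ 2 - 2 * (e : ℤ) ^ 4 * f ^ 3 := by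
  have hpoint : ∀ b ∈ Ico 1 f,
      ((2 • chazyTerm ((e, b), (e, f - b)) - chazyV ((e, b), (e, f - b)) +
        chazyV (Prod.map Prod.swap Prod.swap ((e, b), (e, f - b))) : ℤ) : ℚ) =
      (2 * e ^ 2 * f ^ 4 - 2 * e ^ 4 * f ^ 2) + (-36 * e ^ 2 * f ^ 3) * b +
        (84 * e ^ 2 * f ^ 2) * b ^ 2 + (-48 * e ^ 2 * f) * b ^ 3 := by
    intro b hb
    simp only [Prod.swap_prod_mk, Prod.map_apply, chazyTerm, chazyV, two_nsmul]
    push_cast [Nat.cast_sub (mem_Ico.1 hb).2.le]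
    ring
  apply Int.cast_injective (α := ℚ)
  rw [Int.cast_sum, sum_congr rfl hpoint, sum_Ico_one_cubic _ _ _ _ hf]
  push_cast
  ring

theorem sum_divisorsAntidiagonal_chazy (n : ℕ) :
    ∑ p ∈ n.divisorsAntidiagonal,
        (2 * p.1 ^ 2 * p.2 ^ 3 - 2 * p.1 ^ 2 * p.2 ^ 4 + 2 * p.1 ^ 4 * p.2 ^ 2 -
          2 * (p.1 : ℤ) ^ 4 * p.2 ^ 3) =
      -2 * (n : ℤ) ^ 2 * (n - 1) * σ 1 n := by
  have hpoint : ∀ p ∈ n.divisorsAntidiagonal,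
      (2 * p.1 ^ 2 * p.2 ^ 3 - 2 * p.1 ^ 2 * p.2 ^ 4 + 2 * p.1 ^ 4 * p.2 ^ 2 -
          2 * (p.1 : ℤ) ^ 4 * p.2 ^ 3) =
        2 * n ^ 2 * p.2 - 2 * n ^ 2 * p.2 ^ 2 + 2 * n ^ 2 * p.1 ^ 2 - 2 * n ^ 3 * p.1 := by
    intro p hp
    have hn : (p.1 : ℤ) * p.2 = n := by exact_mod_cast (Nat.mem_divisorsAntidiagonal.1 hp).1
    rw [← hn]
    ring
  have hfst₁ := sigma_eq_sum_divisorsAntidiagonal_fst (R := ℤ) 1 n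
  have hsnd₁ := sigma_eq_sum_divisorsAntidiagonal_snd (R := ℤ) 1 n
  have hfst₂ := sigma_eq_sum_divisorsAntidiagonal_fst (R := ℤ) 2 n
  have hsnd₂ := sigma_eq_sum_divisorsAntidiagonal_snd (R := ℤ) 2 n
  simp only [pow_one] at hfst₁ hsnd₁
  rw [sum_congr rfl hpoint]
  simp only [sum_add_distrib, sum_sub_distrib, ← mul_sum]
  linear_combination 2 * (n : ℤ) ^ 3 * hfst₁ - 2 * (n : ℤ) ^ 2 * hsnd₁ -
    2 * (n : ℤ) ^ 2 * hfst₂ + 2 * (n : ℤ) ^ 2 * hsnd₂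

end ChazySigma

open ChazySigma

theorem chazy_sigma_identity_general (n : ℕ) :
    (n : ℤ) ^ 2 * ((n : ℤ) - 1) * (ArithmeticFunction.sigma 1 n : ℤ)
      + ∑ m ∈ Finset.Ico 1 n,
          12 * (m : ℤ) * (5 * (m : ℤ) - 3 * (n : ℤ)) *
            (ArithmeticFunction.sigma 1 m : ℤ) * (ArithmeticFunction.sigma 1 (n - m) : ℤ)
      = 0 := by
  have hconv : ∑ m ∈ Ico 1 n, 12 * (m : ℤ) * (5 * (m : ℤ) - 3 * (n : ℤ)) *
      (σ 1 m : ℤ) * (σ 1 (n - m) : ℤ) = ∑ q ∈ twoProdReps n, chazyTerm q := by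
    rw [sum_mul_sigma_mul_sigma n fun m => 12 * (m : ℤ) * (5 * m - 3 * n)]
    refine sum_congr rfl fun ⟨⟨a, b⟩, ⟨c, d⟩⟩ hq => ?_
    rw [← (mem_twoProdReps.1 hq).1]
    push_cast
    rfl
  have hliouville := two_nsmul_sum_twoProdReps n chazyTerm chazyW chazyV chazyV_swap
    fun q _ hlt => chazyTerm_add_chazyTerm_swap hlt.le
  have hdiag : ∑ q ∈ twoProdReps n with q.1.1 = q.2.1,
      (2 • chazyTerm q - chazyV q + chazyV (Prod.map Prod.swap Prod.swap q)) =
        -2 * (n : ℤ) ^ 2 * (n - 1) * σ 1 n := by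
    rw [sum_twoProdReps_diag, ← sum_divisorsAntidiagonal_chazy]
    exact sum_congr rfl fun p hp => sum_Ico_one_chazy_diag p.1
      (Nat.pos_of_ne_zero (Nat.right_ne_zero_of_mem_divisorsAntidiagonal hp))
  rw [hdiag, two_nsmul] at hliouville
  rw [hconv]
  linarith

/-- The arithmetical identity
`n²(n−1)σ₁(n) + ∑_{m=1}^{n−1} 12m(5m−3n)σ₁(m)σ₁(n−m) = 0`
obtained from the `q`-expansion of Ramanujan's `P` in the Chazy equation. -/
theorem chazy_sigma_identity (n : ℕ) (hn : 1 ≤ n) :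
    (n : ℤ) ^ 2 * ((n : ℤ) - 1) * (ArithmeticFunction.sigma 1 n : ℤ)
      + ∑ m ∈ Finset.Ico 1 n,
          12 * (m : ℤ) * (5 * (m : ℤ) - 3 * (n : ℤ)) *
            (ArithmeticFunction.sigma 1 m : ℤ) * (ArithmeticFunction.sigma 1 (n - m) : ℤ)
      = 0 :=
  chazy_sigma_identity_general n
end

section
/- Suppose y is a function on a domain D ⊆ ℂ satisfying the quasi-automorphy property y(γ(z)) = (cz+d)²y(z) + pc(cz+d) for all γ = [[a,b],[c,d]] in a subgroup Γ of SL₂(ℝ) acting on D, where p ≠ 0 is a constant. Then f₂ := y' − y²/p satisfies f₂(γ(z)) = (cz+d)⁴f₂(z) for all γ ∈ Γ, i.e. f₂ is an automorphic form of weight 4. -/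
/-! Differentiating the quasi-automorphy relation along `γ`, using `γ'(z) = (cz+d)⁻²`, gives
`y'(γz) = (cz+d)⁴ y'(z) + 2c(cz+d)³ y(z) + pc²(cz+d)²`. The last two terms are exactly the cross
terms of `y(γz)²/p = ((cz+d)² y(z) + pc(cz+d))²/p`, so they cancel in `y' − y²/p`. -/

open Filter Topology

section Moebius

variable {a b c d z : ℂ}

theorem hasDerivAt_moebius (hz : c * z + d ≠ 0) :
    HasDerivAt (fun w => (a * w + b) / (c * w + d)) ((a * d - b * c) / (c * z + d) ^ 2) z := by
  have hnum : HasDerivAt (fun w => a * w + b) a z := by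
    simpa using ((hasDerivAt_id z).const_mul a).add_const b
  have hden : HasDerivAt (fun w => c * w + d) c z := by
    simpa using ((hasDerivAt_id z).const_mul c).add_const d
  refine (hnum.div hden hz).congr_deriv ?_
  ring

theorem deriv_moebius_of_quasiAutomorphic {p : ℂ} {y : ℂ → ℂ} (hdet : a * d - b * c = 1)
    (hz : c * z + d ≠ 0) (hyz : DifferentiableAt ℂ y z)
    (hyγz : DifferentiableAt ℂ y ((a * z + b) / (c * z + d)))
    (hqa : (fun w => y ((a * w + b) / (c * w + d))) =ᶠ[𝓝 z]
      fun w => (c * w + d) ^ 2 * y w + p * c * (c * w + d)) :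
    deriv y ((a * z + b) / (c * z + d)) =
      (c * z + d) ^ 4 * deriv y z + 2 * c * (c * z + d) ^ 3 * y z + p * c ^ 2 * (c * z + d) ^ 2 := by
  have hden : HasDerivAt (fun w => c * w + d) c z := by
    simpa using ((hasDerivAt_id z).const_mul c).add_const d
  have hlhs : HasDerivAt (fun w => y ((a * w + b) / (c * w + d)))
      (deriv y ((a * z + b) / (c * z + d)) * (1 / (c * z + d) ^ 2)) z := by
    rw [← hdet]
    exact hyγz.hasDerivAt.comp z (hasDerivAt_moebius hz)
  have hrhs : HasDerivAt (fun w => (c * w + d) ^ 2 * y w + p * c * (c * w + d))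
      (2 * c * (c * z + d) * y z + (c * z + d) ^ 2 * deriv y z + p * c * c) z := by
    refine (((hden.pow 2).mul hyz.hasDerivAt).add (hden.const_mul (p * c))).congr_deriv ?_
    simp only [Pi.pow_apply]
    ring
  have hchain := (hqa.hasDerivAt_iff.mp hlhs).unique hrhs
  rw [mul_one_div, div_eq_iff (pow_ne_zero 2 hz)] at hchain
  linear_combination hchain

end Moebius

/-- If `y` is quasi-automorphic of weight 2 with affinity coefficient `p ≠ 0`
under a Möbius transformation `z ↦ (az+b)/(cz+d)` (real `a,b,c,d`, `ad−bc = 1`)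
preserving a domain `D`, then `f₂ := y' − y²/p` is automorphic of weight 4:
`f₂(γ(z)) = (cz+d)⁴ f₂(z)`. -/
theorem weight_four_form (D : Set ℂ) (hD : IsOpen D) (y : ℂ → ℂ)
    (hy : DifferentiableOn ℂ y D) (p : ℂ) (hp : p ≠ 0)
    (a b c d : ℝ) (hdet : a * d - b * c = 1)
    (hmap : ∀ z ∈ D, ((a : ℂ) * z + b) / ((c : ℂ) * z + d) ∈ D)
    (hcd : ∀ z ∈ D, (c : ℂ) * z + d ≠ 0)
    (hqa : ∀ z ∈ D,
      y (((a : ℂ) * z + b) / ((c : ℂ) * z + d)) =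
        ((c : ℂ) * z + d) ^ 2 * y z + p * c * ((c : ℂ) * z + d)) :
    ∀ z ∈ D,
      deriv y (((a : ℂ) * z + b) / ((c : ℂ) * z + d))
          - (y (((a : ℂ) * z + b) / ((c : ℂ) * z + d))) ^ 2 / p
        = ((c : ℂ) * z + d) ^ 4 * (deriv y z - (y z) ^ 2 / p) := by
  intro z hz
  have hdetC : (a : ℂ) * d - b * c = 1 := by exact_mod_cast hdet
  have hderiv := deriv_moebius_of_quasiAutomorphic hdetC (hcd z hz)
    (hy.differentiableAt (hD.mem_nhds hz)) (hy.differentiableAt (hD.mem_nhds (hmap z hz)))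
    (eventually_of_mem (hD.mem_nhds hz) hqa)
  rw [hderiv, hqa z hz]
  field_simp
  ring
end

section
/- Suppose w₁, w₂, w₃ solve the classical Darboux–Halphen system w₁' = w₁(w₂+w₃) − w₂w₃, w₂' = w₂(w₃+w₁) − w₃w₁, w₃' = w₃(w₁+w₂) − w₁w₂. Then y := 2(w₁+w₂+w₃) satisfies the Chazy equation y''' = 2yy'' − 3(y')²; moreover y' = 2(w₁w₂+w₂w₃+w₃w₁) and y'' = 12w₁w₂w₃. -/
/-!
Along a solution of the Darboux–Halphen system the elementary symmetric functions
`e₁ = w₁ + w₂ + w₃`, `e₂ = w₁w₂ + w₂w₃ + w₃w₁`, `e₃ = w₁w₂w₃` satisfy the closed system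
`e₁' = e₂`, `e₂' = 6e₃`, `e₃' = 4e₁e₃ - e₂²`. With `y = 2e₁` this gives `y' = 2e₂`, `y'' = 12e₃` and
`y''' = 12(4e₁e₃ - e₂²) = 2yy'' - 3y'²`.
-/

variable {𝕜 : Type*} [NontriviallyNormedField 𝕜]

structure IsDarbouxHalphen (w₁ w₂ w₃ : 𝕜 → 𝕜) : Prop where
  hasDerivAt₁ : ∀ z, HasDerivAt w₁ (w₁ z * (w₂ z + w₃ z) - w₂ z * w₃ z) z
  hasDerivAt₂ : ∀ z, HasDerivAt w₂ (w₂ z * (w₃ z + w₁ z) - w₃ z * w₁ z) z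
  hasDerivAt₃ : ∀ z, HasDerivAt w₃ (w₃ z * (w₁ z + w₂ z) - w₁ z * w₂ z) z

namespace IsDarbouxHalphen

variable {w₁ w₂ w₃ : 𝕜 → 𝕜}

theorem of_deriv (h₁ : Differentiable 𝕜 w₁) (h₂ : Differentiable 𝕜 w₂)
    (h₃ : Differentiable 𝕜 w₃)
    (hd₁ : ∀ z, deriv w₁ z = w₁ z * (w₂ z + w₃ z) - w₂ z * w₃ z)
    (hd₂ : ∀ z, deriv w₂ z = w₂ z * (w₃ z + w₁ z) - w₃ z * w₁ z)
    (hd₃ : ∀ z, deriv w₃ z = w₃ z * (w₁ z + w₂ z) - w₁ z * w₂ z) :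
    IsDarbouxHalphen w₁ w₂ w₃ where
  hasDerivAt₁ z := hd₁ z ▸ (h₁ z).hasDerivAt
  hasDerivAt₂ z := hd₂ z ▸ (h₂ z).hasDerivAt
  hasDerivAt₃ z := hd₃ z ▸ (h₃ z).hasDerivAt

theorem hasDerivAt_sum (h : IsDarbouxHalphen w₁ w₂ w₃) (z : 𝕜) :
    HasDerivAt (fun z ↦ w₁ z + w₂ z + w₃ z) (w₁ z * w₂ z + w₂ z * w₃ z + w₃ z * w₁ z) z :=
  (((h.hasDerivAt₁ z).fun_add (h.hasDerivAt₂ z)).fun_add (h.hasDerivAt₃ z)).congr_deriv (by ring)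

theorem hasDerivAt_sum_mul (h : IsDarbouxHalphen w₁ w₂ w₃) (z : 𝕜) :
    HasDerivAt (fun z ↦ w₁ z * w₂ z + w₂ z * w₃ z + w₃ z * w₁ z) (6 * (w₁ z * w₂ z * w₃ z)) z :=
  ((((h.hasDerivAt₁ z).fun_mul (h.hasDerivAt₂ z)).fun_add
    ((h.hasDerivAt₂ z).fun_mul (h.hasDerivAt₃ z))).fun_add
    ((h.hasDerivAt₃ z).fun_mul (h.hasDerivAt₁ z))).congr_deriv (by ring)

theorem hasDerivAt_prod (h : IsDarbouxHalphen w₁ w₂ w₃) (z : 𝕜) :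
    HasDerivAt (fun z ↦ w₁ z * w₂ z * w₃ z)
      (4 * (w₁ z + w₂ z + w₃ z) * (w₁ z * w₂ z * w₃ z) -
        (w₁ z * w₂ z + w₂ z * w₃ z + w₃ z * w₁ z) ^ 2) z :=
  (((h.hasDerivAt₁ z).fun_mul (h.hasDerivAt₂ z)).fun_mul (h.hasDerivAt₃ z)).congr_deriv (by ring)

end IsDarbouxHalphen

/-- If `w₁, w₂, w₃` solve the classical Darboux–Halphen system, then
`y := 2(w₁+w₂+w₃)` satisfies the Chazy equation `y''' = 2yy'' − 3(y')²`; moreover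
`y' = 2(w₁w₂+w₂w₃+w₃w₁)` and `y'' = 12w₁w₂w₃`. -/
theorem darboux_halphen_to_chazy (w1 w2 w3 : ℂ → ℂ)
    (h1 : Differentiable ℂ w1) (h2 : Differentiable ℂ w2) (h3 : Differentiable ℂ w3)
    (hd1 : ∀ z : ℂ, deriv w1 z = w1 z * (w2 z + w3 z) - w2 z * w3 z)
    (hd2 : ∀ z : ℂ, deriv w2 z = w2 z * (w3 z + w1 z) - w3 z * w1 z)
    (hd3 : ∀ z : ℂ, deriv w3 z = w3 z * (w1 z + w2 z) - w1 z * w2 z) :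
    let y : ℂ → ℂ := fun z => 2 * (w1 z + w2 z + w3 z)
    (∀ z : ℂ, deriv y z = 2 * (w1 z * w2 z + w2 z * w3 z + w3 z * w1 z)) ∧
    (∀ z : ℂ, deriv (deriv y) z = 12 * (w1 z * w2 z * w3 z)) ∧
    (∀ z : ℂ, deriv (deriv (deriv y)) z =
      2 * y z * deriv (deriv y) z - 3 * (deriv y z) ^ 2) := by
  intro y
  have h := IsDarbouxHalphen.of_deriv h1 h2 h3 hd1 hd2 hd3
  have hy' : deriv y = fun z ↦ 2 * (w1 z * w2 z + w2 z * w3 z + w3 z * w1 z) :=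
    funext fun z ↦ ((h.hasDerivAt_sum z).const_mul 2).deriv
  have hy'' : deriv (deriv y) = fun z ↦ 12 * (w1 z * w2 z * w3 z) := by
    rw [hy']
    exact funext fun z ↦ ((h.hasDerivAt_sum_mul z).const_mul 2).deriv.trans (by ring)
  refine ⟨fun z ↦ by rw [hy'], fun z ↦ by rw [hy''], fun z ↦ ?_⟩
  rw [hy'', ((h.hasDerivAt_prod z).const_mul 12).deriv, hy']
  ring
end
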